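/- There is a bijection between the set 𝒞_{n+1} of Dyck words of length 2n+2 (words over {−1,1} summing to 0 with nonnegative partial sums) and the set 𝒢'_n of words of length n+1 over {−1, 0, 0̄, 1} summing to 0 (with 0̄ valued 0), with all partial sums nonnegative, such that the partial sum before every occurrence of 0̄ is strictly positive. The bijection is given by applying to consecutive pairs the map f with f(1,1) = 1, f(1,−1) = 0, f(−1,1) = 0̄, f(−1,−1) = −1. -/

import Mathlib

inductive Letter : Type
  | up | zero | zbar | down
deriving DecidableEq

def val : Letter → ℤ
  | .up => 1
  | .zero => 0
  | .zbar => 0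
  | .down => -1

def f (a b : ℤ) : Letter :=
  if a = 1 then (if b = 1 then .up else .zero)
  else (if b = 1 then .zbar else .down)

def pairMap : List ℤ → List Letter
  | a :: b :: rest => f a b :: pairMap rest
  | _ => []

/-- Dyck words of length 2n -/
def Cset (n : ℕ) : Set (List ℤ) :=
  {w | w.length = 2 * n ∧ (∀ x ∈ w, x = 1 ∨ x = -1) ∧ w.sum = 0 ∧
    ∀ p, p <+: w → 0 ≤ p.sum}

/-- The set 𝒢'_n -/
def Gset' (n : ℕ) : Set (List Letter) :=
  {w | w.length = n + 1 ∧ (w.map val).sum = 0 ∧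
    (∀ p, p <+: w → 0 ≤ (p.map val).sum) ∧
    ∀ p t, w = p ++ Letter.zbar :: t → 0 < (p.map val).sum}

/-! Expanding each letter back into its two steps (`1 ↦ 1 1`, `0 ↦ 1 −1`, `0̄ ↦ −1 1`,
`−1 ↦ −1 −1`) inverts `pairMap` on words of ±1 of even length. The partial sums of the expansion
at even positions are twice those of the letter word; at the odd position inside a letter the
height is one more or one less than at the position before it, and it can become negative only
for `0̄` or `−1` read at height zero. For `−1` this is already excluded by the next even
position, and for `0̄` it is precisely the extra condition of 𝒢'. -/

theorem List.forall_prefix_cons_iff {α : Type*} {P : List α → Prop} {a : α} {l : List α} :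
    (∀ q, q <+: a :: l → P q) ↔ P [] ∧ ∀ q, q <+: l → P (a :: q) := by
  simp only [List.prefix_cons_iff]
  aesop

theorem List.forall_cons_eq_append_cons_iff {α : Type*} {P : List α → Prop} {x a : α}
    {l : List α} :
    (∀ p t, a :: l = p ++ x :: t → P p) ↔
      (a = x → P []) ∧ ∀ p t, l = p ++ x :: t → P (a :: p) := by
  simp only [List.cons_eq_append_iff]
  aesop

theorem List.forall_prefix_append_iff {α : Type*} {P : List α → Prop} {x y : List α} :
    (∀ q, q <+: x ++ y → P q) ↔ (∀ q, q <+: x → P q) ∧ ∀ q, q <+: y → P (x ++ q) := by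
  induction x generalizing P with
  | nil =>
    simp only [List.nil_append, List.prefix_nil, forall_eq]
    exact ⟨fun h => ⟨h [] List.nil_prefix, h⟩, And.right⟩
  | cons a x ih =>
    simp only [List.cons_append, List.forall_prefix_cons_iff, ih]
    tauto

namespace Letter

def steps : Letter → List ℤ
  | up => [1, 1]
  | zero => [1, -1]
  | zbar => [-1, 1]
  | down => [-1, -1]

theorem steps_f {a b : ℤ} (ha : a = 1 ∨ a = -1) (hb : b = 1 ∨ b = -1) :
    (f a b).steps = [a, b] := by
  rcases ha with rfl | rfl <;> rcases hb with rfl | rfl <;> rfl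

theorem sum_steps (l : Letter) : l.steps.sum = 2 * val l := by
  cases l <;> rfl

theorem mem_steps {l : Letter} {x : ℤ} (hx : x ∈ l.steps) : x = 1 ∨ x = -1 := by
  cases l <;> simp [steps] at hx <;> omega

theorem forall_prefix_steps_iff (l : Letter) (s : ℤ) :
    (∀ q, q <+: l.steps → 0 ≤ s + q.sum) ↔ 0 ≤ s ∧ 0 ≤ s + 2 * val l ∧ (l = zbar → 0 < s) := by
  cases l <;> simp [steps, List.forall_prefix_cons_iff, val] <;> omega

end Letter

def unpair (u : List Letter) : List ℤ := u.flatMap Letter.steps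

@[simp] theorem unpair_nil : unpair [] = [] := rfl

@[simp] theorem unpair_cons (l : Letter) (u : List Letter) :
    unpair (l :: u) = l.steps ++ unpair u := rfl

theorem pairMap_unpair : ∀ u : List Letter, pairMap (unpair u) = u
  | [] => rfl
  | l :: u => by cases l <;> simp [Letter.steps, pairMap, f, pairMap_unpair u]

theorem unpair_pairMap : ∀ w : List ℤ, (∀ x ∈ w, x = 1 ∨ x = -1) → Even w.length →
    unpair (pairMap w) = w
  | [], _, _ => rfl
  | [_], _, h => by simp at h
  | a :: b :: w, hw, h => by
    simp only [List.forall_mem_cons] at hw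
    rw [pairMap, unpair_cons, Letter.steps_f hw.1 hw.2.1,
      unpair_pairMap w hw.2.2 (by simpa [parity_simps] using h)]
    rfl

theorem length_unpair (u : List Letter) : (unpair u).length = 2 * u.length := by
  induction u with
  | nil => rfl
  | cons l u ih => cases l <;> simp [Letter.steps, ih] <;> ring

theorem sum_unpair (u : List Letter) : (unpair u).sum = 2 * (u.map val).sum := by
  induction u with
  | nil => rfl
  | cons l u ih => simp [Letter.sum_steps, ih]; ring

theorem mem_unpair {u : List Letter} {x : ℤ} (hx : x ∈ unpair u) : x = 1 ∨ x = -1 := by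
  obtain ⟨l, -, hl⟩ := List.mem_flatMap.1 hx
  exact Letter.mem_steps hl

theorem prefix_sum_nonneg_unpair_iff (s : ℤ) (u : List Letter) :
    (∀ q, q <+: unpair u → 0 ≤ s + q.sum) ↔
      (∀ p, p <+: u → 0 ≤ s + 2 * (p.map val).sum) ∧
        ∀ p t, u = p ++ .zbar :: t → 0 < s + 2 * (p.map val).sum := by
  induction u generalizing s with
  | nil => simp
  | cons l u ih =>
    have hshift (x : ℤ) : s + 2 * (val l + x) = s + 2 * val l + 2 * x := by ring
    simp only [unpair_cons, List.forall_prefix_append_iff, List.sum_append, Letter.sum_steps,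
      ← add_assoc, ih, Letter.forall_prefix_steps_iff, List.forall_prefix_cons_iff,
      List.forall_cons_eq_append_cons_iff, List.map_cons, List.sum_cons, hshift, List.map_nil,
      List.sum_nil, mul_zero, add_zero]
    have hhead (h : ∀ p, p <+: u → 0 ≤ s + 2 * val l + 2 * (p.map val).sum) :
        0 ≤ s + 2 * val l := by simpa using h [] List.nil_prefix
    tauto

theorem unpair_mem_Cset_iff {n : ℕ} {u : List Letter} :
    unpair u ∈ Cset (n + 1) ↔ u ∈ Gset' n := by
  have h := prefix_sum_nonneg_unpair_iff 0 u
  simp only [zero_add] at h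
  have hmem : ∀ x ∈ unpair u, x = 1 ∨ x = -1 := fun _ => mem_unpair
  simp [Cset, Gset', length_unpair, sum_unpair, h, eq_true hmem]

theorem pairMap_bijOn (n : ℕ) : Set.BijOn pairMap (Cset (n + 1)) (Gset' n) := by
  have hinv : Set.InvOn unpair pairMap (Cset (n + 1)) (Gset' n) :=
    ⟨fun w hw => unpair_pairMap w hw.2.1 (hw.1 ▸ even_two_mul _),
      fun u _ => pairMap_unpair u⟩
  refine hinv.bijOn (fun w hw => ?_) (fun u hu => unpair_mem_Cset_iff.2 hu)
  exact unpair_mem_Cset_iff.1 ((hinv.1 hw).symm ▸ hw)
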